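/- Suppose A tiles ℤ with period M (i.e., there is B with A ⊕ B ⊕ Mℤ = ℤ), and M = m·M' where M' has the same prime factors as |A| and gcd(m, |A|) = 1. Then A tiles ℤ with period M', i.e., there exists B' with A ⊕ B' ⊕ M'ℤ = ℤ. -/

import Mathlib

/-!
Tijdeman's dilation theorem, via mask polynomials `A(X) = ∑_{a ∈ A} X^a` in the group ring
`𝔽_p[G]`: a tiling `A ⊕ B = G` reads `A(X) B(X) = U(X) := ∑_{g ∈ G} X^g`. By Frobenius
`(pA)(X) = A(X)^p`, and `A(X) U(X) = |A| U(X)`, so `(pA)(X) B(X) = |A|^{p-1} U(X) = U(X)` when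
`p ∤ |A|`. Hence every element of `G` is of the form `pa + b`, and as `|A| |B| = |G|` only once.
Iterating over the prime factors of `m` gives `mA ⊕ B = ℤ/mM'`. Back in `ℤ`, the unique
representation `mn = ma + b + mM'k` forces `m ∣ b`, so `A ⊕ {b' | mb' ∈ B} ⊕ M'ℤ = ℤ`.
-/

open AddMonoidAlgebra

theorem Multiset.map_product_map {α β γ δ : Type*} (s : Multiset α) (t : Multiset β)
    (f : α → γ) (g : β → δ) : s.map f ×ˢ t.map g = (s ×ˢ t).map (Prod.map f g) := by
  induction s using Multiset.induction_on with
  | empty => simp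
  | cons a s ih => simp [Multiset.cons_product, ih, Multiset.map_map]

section Tiling

variable {G : Type*} [AddCommGroup G]

/-- Multisets rather than finsets, since a dilate `p • A` may have repeated elements. -/
def IsTiling [Fintype G] (A B : Multiset G) : Prop :=
  (A ×ˢ B).map (fun x => x.1 + x.2) = (Finset.univ : Finset G).val

variable (R : Type*) [Semiring R]

noncomputable def mask (A : Multiset G) : R[G] := (A.map (of' R G)).sum

variable {R}

@[simp] theorem mask_add (A B : Multiset G) : mask R (A + B) = mask R A + mask R B := by
  simp [mask]

@[simp] theorem mask_cons (a : G) (A : Multiset G) : mask R (a ::ₘ A) = of' R G a + mask R A := by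
  simp [mask]

theorem coeff_mask [DecidableEq G] (A : Multiset G) (g : G) :
    (mask R A).coeff g = A.count g := by
  induction A using Multiset.induction_on with
  | empty => simp [mask]
  | cons a A ih =>
    simp [ih, of'_apply, coeff_single, Multiset.count_cons, Finsupp.single_apply, eq_comm]
    exact add_comm _ _

theorem mask_map_add_left (x : G) (A : Multiset G) :
    mask R (A.map (x + ·)) = of' R G x * mask R A := by
  simp [mask, Multiset.map_map, Function.comp_def, ← Multiset.sum_map_mul_left, of'_apply,
    single_mul_single]

theorem mask_mul_mask (A B : Multiset G) :
    mask R A * mask R B = mask R ((A ×ˢ B).map fun x => x.1 + x.2) := by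
  induction A using Multiset.induction_on with
  | empty => simp [mask]
  | cons a A ih =>
    rw [mask_cons, add_mul, ih, Multiset.cons_product, Multiset.map_add, mask_add,
      Multiset.map_map, ← mask_map_add_left]
    rfl

theorem mask_mul_mask_univ [Fintype G] (A : Multiset G) :
    mask R A * mask R (Finset.univ : Finset G).val =
      (A.card : R) • mask R (Finset.univ : Finset G).val := by
  induction A using Multiset.induction_on with
  | empty => simp [mask]
  | cons a A ih =>
    rw [mask_cons, add_mul, ih, ← mask_map_add_left, ← Equiv.coe_addLeft,
      Multiset.map_univ_val_equiv, Multiset.card_cons, Nat.cast_succ, add_smul, one_smul, add_comm]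

theorem mask_map_nsmul_char (p : ℕ) [Fact p.Prime] (A : Multiset G) :
    mask (ZMod p) (A.map (p • ·)) = mask (ZMod p) A ^ p := by
  have : CharP (ZMod p)[G] p := charP_of_injective_algebraMap' (ZMod p) p
  rw [mask, mask, multiset_sum_pow_char, Multiset.map_map, Multiset.map_map]
  simp [Function.comp_def, of'_apply, single_pow]

theorem mask_pow_mul_mask_univ {R : Type*} [CommSemiring R] [Fintype G] (A : Multiset G) (k : ℕ) :
    mask R A ^ k * mask R (Finset.univ : Finset G).val =
      (A.card : R) ^ k • mask R (Finset.univ : Finset G).val := by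
  induction k with
  | zero => simp
  | succ k ih =>
    rw [pow_succ', mul_assoc, ih, mul_smul_comm, mask_mul_mask_univ, smul_smul, pow_succ]

variable [Fintype G] {A B : Multiset G}

theorem IsTiling.card_mul_card (h : IsTiling A B) : A.card * B.card = Fintype.card G := by
  simpa [IsTiling, Multiset.card_product] using congrArg Multiset.card h

theorem IsTiling.map_nsmul_of_prime {p : ℕ} (hp : p.Prime) (hpA : ¬ p ∣ A.card)
    (h : IsTiling A B) : IsTiling (A.map (p • ·)) B := by
  have := Fact.mk hp
  classical
  set U := (Finset.univ : Finset G).val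
  set S := (A.map (p • ·) ×ˢ B).map fun x => x.1 + x.2
  have hmask : mask (ZMod p) S = mask (ZMod p) U := calc
    mask (ZMod p) S = mask (ZMod p) A ^ (p - 1) * (mask (ZMod p) A * mask (ZMod p) B) := by
      rw [← mask_mul_mask, mask_map_nsmul_char, ← mul_assoc, ← pow_succ,
        Nat.sub_add_cancel hp.one_le]
    _ = (A.card : ZMod p) ^ (p - 1) • mask (ZMod p) U := by
      rw [mask_mul_mask, h, mask_pow_mul_mask_univ]
    _ = mask (ZMod p) U := by
      rw [ZMod.pow_card_sub_one_eq_one ((ZMod.natCast_eq_zero_iff _ _).not.2 hpA), one_smul]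
  have hmem : ∀ g, g ∈ S := fun g => by
    by_contra hg
    simpa [coeff_mask, Multiset.count_eq_zero.2 hg, U] using congrArg (fun x => x.coeff g) hmask
  have hcard : S.card = U.card := by
    simp [S, U, Multiset.card_product, h.card_mul_card]
  exact (Multiset.eq_of_le_of_card_le ((Multiset.le_iff_subset Finset.univ.nodup).2
    fun g _ => hmem g) hcard.le).symm

theorem IsTiling.map_nsmul_of_coprime {m : ℕ} (hm : m ≠ 0) (hcop : m.Coprime A.card)
    (h : IsTiling A B) : IsTiling (A.map (m • ·)) B := by
  induction m using Nat.recOnMul generalizing A with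
  | zero => exact absurd rfl hm
  | one => simpa using h
  | prime p hp => exact h.map_nsmul_of_prime hp ((Nat.Prime.coprime_iff_not_dvd hp).1 hcop)
  | mul a b iha ihb =>
    have hA := iha (left_ne_zero_of_mul hm) (Nat.Coprime.coprime_mul_right hcop) h
    have hab := ihb (right_ne_zero_of_mul hm)
      (by simpa using Nat.Coprime.coprime_mul_left hcop) hA
    simpa [Multiset.map_map, Function.comp_def, mul_nsmul] using hab

end Tiling

theorem Finset.val_map_eq_univ_iff {α β : Type*} [Fintype β] (s : Finset α) (f : α → β) :
    s.val.map f = (Finset.univ : Finset β).val ↔ ∀ y, ∃! x, x ∈ s ∧ f x = y := by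
  constructor
  · intro hs y
    obtain ⟨x, hx, rfl⟩ := Multiset.mem_map.1 (hs ▸ Finset.mem_univ_val y)
    refine ⟨x, ⟨hx, rfl⟩, fun x' ⟨hx', hfx⟩ => ?_⟩
    exact Multiset.inj_on_of_nodup_map (hs ▸ Finset.univ.nodup) _ hx' _ hx hfx
  · intro hf
    have hnd : (s.val.map f).Nodup :=
      s.nodup.map_on fun x hx x' hx' hxx' => (hf (f x')).unique ⟨hx, hxx'⟩ ⟨hx', rfl⟩
    have huniv : (⟨_, hnd⟩ : Finset β) = Finset.univ := Finset.eq_univ_iff_forall.2 fun y => by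
      obtain ⟨x, ⟨hx, hfx⟩, -⟩ := hf y
      exact Multiset.mem_map.2 ⟨x, hx, hfx⟩
    exact congrArg Finset.val huniv

theorem isTiling_map_iff {α G : Type*} [AddCommGroup G] [Fintype G] (A B : Finset α) (f : α → G) :
    IsTiling (A.val.map f) (B.val.map f) ↔ ∀ g, ∃! x, x ∈ A ×ˢ B ∧ f x.1 + f x.2 = g := by
  rw [IsTiling, Multiset.map_product_map, Multiset.map_map, ← Finset.product_val,
    Finset.val_map_eq_univ_iff]
  rfl

def IsPeriodicTiling (A B : Finset ℤ) (M : ℕ) : Prop :=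
  ∀ n : ℤ, ∃! t : ℤ × ℤ × ℤ, t.1 ∈ A ∧ t.2.1 ∈ B ∧ t.1 + t.2.1 + (M : ℤ) * t.2.2 = n

namespace IsPeriodicTiling

variable {A B : Finset ℤ} {M : ℕ}

theorem ne_zero (h : IsPeriodicTiling A B M) : M ≠ 0 := by
  rintro rfl
  obtain ⟨⟨a, b, k⟩, hsol, huniq⟩ := h 0
  simpa using huniq (a, b, k + 1) (by simpa using hsol)

theorem of_image_mul {m M' : ℕ} (hm : (m : ℤ) ≠ 0)
    (h : IsPeriodicTiling (A.image ((m : ℤ) * ·)) B (m * M')) :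
    IsPeriodicTiling A (B.preimage ((m : ℤ) * ·) (mul_right_injective₀ hm).injOn) M' := by
  intro n
  obtain ⟨⟨x, b, k⟩, ⟨hx, hb, hsum⟩, huniq⟩ := h (m * n)
  obtain ⟨a, ha, rfl⟩ := Finset.mem_image.1 hx
  have hb' : b = m * (n - a - M' * k) := by
    push_cast at hsum
    linear_combination hsum
  refine ⟨(a, n - a - M' * k, k), ⟨ha, by simpa [← hb'] using hb, by ring⟩, ?_⟩
  rintro ⟨a', b', k'⟩ ⟨ha', hb'', hsum'⟩
  simp only at ha' hb'' hsum'
  have hsol := huniq (m * a', m * b', k') ⟨Finset.mem_image_of_mem _ ha',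
    (Finset.mem_preimage.1 hb'' : (m : ℤ) * b' ∈ B), by push_cast; linear_combination m * hsum'⟩
  simp only [Prod.mk.injEq] at hsol
  obtain ⟨ha'a, -, rfl⟩ := hsol
  obtain rfl := mul_left_cancel₀ hm ha'a
  exact Prod.ext rfl (Prod.ext (by simp only; linarith) rfl)

end IsPeriodicTiling

theorem isPeriodicTiling_iff_isTiling {A B : Finset ℤ} {M : ℕ} [NeZero M] :
    IsPeriodicTiling A B M ↔ IsTiling (A.val.map ((↑) : ℤ → ZMod M)) (B.val.map (↑)) := by
  have hM : (M : ℤ) ≠ 0 := Int.natCast_ne_zero.2 (NeZero.ne M)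
  have hsum_eq_iff (a b n : ℤ) : (a : ZMod M) + b = n ↔ ∃ k, a + b + M * k = n := by
    rw [← Int.cast_add, ZMod.intCast_eq_intCast_iff_dvd_sub]
    exact exists_congr fun k => by constructor <;> intro h <;> linarith
  rw [isTiling_map_iff, ZMod.intCast_surjective.forall]
  refine forall_congr' fun n => ⟨?_, ?_⟩
  · rintro ⟨⟨a, b, k⟩, ⟨ha, hb, hsum⟩, huniq⟩
    refine ⟨(a, b), ⟨Finset.mem_product.2 ⟨ha, hb⟩, (hsum_eq_iff a b n).2 ⟨k, hsum⟩⟩, ?_⟩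
    rintro ⟨a', b'⟩ ⟨hab', hsum'⟩
    obtain ⟨k', hk'⟩ := (hsum_eq_iff a' b' n).1 hsum'
    obtain ⟨ha', hb'⟩ := Finset.mem_product.1 hab'
    have := huniq (a', b', k') ⟨ha', hb', hk'⟩
    simp only [Prod.mk.injEq] at this ⊢
    exact ⟨this.1, this.2.1⟩
  · rintro ⟨⟨a, b⟩, ⟨hab, hsum⟩, huniq⟩
    obtain ⟨k, hk⟩ := (hsum_eq_iff a b n).1 hsum
    obtain ⟨ha, hb⟩ := Finset.mem_product.1 hab
    refine ⟨(a, b, k), ⟨ha, hb, hk⟩, ?_⟩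
    rintro ⟨a', b', k'⟩ ⟨ha', hb', hk'⟩
    have := huniq (a', b') ⟨Finset.mem_product.2 ⟨ha', hb'⟩, (hsum_eq_iff a' b' n).2 ⟨k', hk'⟩⟩
    simp only [Prod.mk.injEq] at this hk' ⊢
    obtain ⟨rfl, rfl⟩ := this
    exact ⟨rfl, rfl, mul_left_cancel₀ hM (by linarith)⟩

theorem stmt15_general (A B : Finset ℤ) (M M' m : ℕ)
    (htile : ∀ n : ℤ, ∃! t : ℤ × ℤ × ℤ,
      t.1 ∈ A ∧ t.2.1 ∈ B ∧ t.1 + t.2.1 + (M : ℤ) * t.2.2 = n)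
    (hfac : M = m * M')
    (hcop : Nat.Coprime m A.card) :
    ∃ B' : Finset ℤ, ∀ n : ℤ, ∃! t : ℤ × ℤ × ℤ,
      t.1 ∈ A ∧ t.2.1 ∈ B' ∧ t.1 + t.2.1 + (M' : ℤ) * t.2.2 = n := by
  have hM : M ≠ 0 := IsPeriodicTiling.ne_zero htile
  subst hfac
  have : NeZero (m * M') := ⟨hM⟩
  have hm : (m : ℤ) ≠ 0 := Int.natCast_ne_zero.2 (left_ne_zero_of_mul hM)
  refine ⟨_, IsPeriodicTiling.of_image_mul (B := B) hm ?_⟩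
  have hdil := (isPeriodicTiling_iff_isTiling.1 htile).map_nsmul_of_coprime
    (left_ne_zero_of_mul hM) (by simpa using hcop)
  rw [isPeriodicTiling_iff_isTiling, Finset.image_val_of_injOn (mul_right_injective₀ hm).injOn]
  simpa [Multiset.map_map, Function.comp_def] using hdil

/-- Coven–Meyerowitz reduction: if `A ⊕ B ⊕ Mℤ = ℤ` with `M = m·M'`, where `M'` has the
same prime factors as `|A|` and `gcd(m,|A|) = 1`, then `A` tiles with period `M'`. -/
theorem stmt15 (A B : Finset ℤ) (M M' m : ℕ)
    (htile : ∀ n : ℤ, ∃! t : ℤ × ℤ × ℤ,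
      t.1 ∈ A ∧ t.2.1 ∈ B ∧ t.1 + t.2.1 + (M : ℤ) * t.2.2 = n)
    (hfac : M = m * M')
    (hprimes : M'.primeFactors = A.card.primeFactors)
    (hcop : Nat.Coprime m A.card) :
    ∃ B' : Finset ℤ, ∀ n : ℤ, ∃! t : ℤ × ℤ × ℤ,
      t.1 ∈ A ∧ t.2.1 ∈ B' ∧ t.1 + t.2.1 + (M' : ℤ) * t.2.2 = n :=
  stmt15_general A B M M' m htile hfac hcop
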